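/- Let R be a commutative ring and m, r ∈ R. For all natural numbers n and ℓ, the r-Dowling numbers satisfy the Spivey-type formula: D_{m,r}(n+ℓ) = \sum_{j=0}^{ℓ} \sum_{k=0}^{n} W_{m,r}(ℓ,j) * C(n,k) * (m*j + r)^{n-k} * D_{m,0}(k). (This is the q → 1, x = 1 specialization (result3) of the paper's main result.) -/

import Mathlib

/-- The r-Whitney numbers of the second kind. -/
def rWhitney {R : Type*} [CommRing R] (m r : R) : ℕ → ℕ → R
  | 0, 0 => 1
  | 0, _ + 1 => 0
  | n + 1, 0 => r * rWhitney m r n 0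
  | n + 1, k + 1 =>
      rWhitney m r n k + (m * ((k : R) + 1) + r) * rWhitney m r n (k + 1)

/-- The r-Dowling numbers. -/
def rDowling {R : Type*} [CommRing R] (m r : R) (n : ℕ) : R :=
  ∑ k ∈ Finset.range (n + 1), rWhitney m r n k

/-!
The row polynomial `∑ₖ W_{m,r}(n,k) Xᵏ` is `T_rⁿ 1` for the operator
`T_a = X + a + m X d/dX` on `R[X]`, so `D_{m,r}(n)` is the value of `T_rⁿ 1` at `1`.
Two properties of `T` give the formula. First, `T_a = T_0 + a` with commuting summands, so
`T_aⁿ = ∑ₖ C(n,k) aⁿ⁻ᵏ T_0ᵏ`, i.e. `D_{m,a}(n) = ∑ₖ C(n,k) aⁿ⁻ᵏ D_{m,0}(k)`.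
Second, `T_a (Xʲ p) = Xʲ T_{mj+a} p`, so expanding `T_r^{n+ℓ} 1 = T_rⁿ (∑ⱼ W_{m,r}(ℓ,j) Xʲ)`
and evaluating at `1` gives `D_{m,r}(n+ℓ) = ∑ⱼ W_{m,r}(ℓ,j) D_{m,mj+r}(n)`.
-/

open Polynomial Finset

section WhitneyOperator

variable {R : Type*} [CommSemiring R]

noncomputable def whitneyOp (m a : R) : Module.End R R[X] :=
  LinearMap.mulLeft R (X + C a) + m • LinearMap.mulLeft R X ∘ₗ derivative

theorem whitneyOp_apply (m a : R) (p : R[X]) :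
    whitneyOp m a p = (X + C a) * p + C m * (X * derivative p) := by
  simp only [whitneyOp, LinearMap.add_apply, LinearMap.smul_apply, LinearMap.comp_apply,
    LinearMap.mulLeft_apply, smul_eq_C_mul]

theorem whitneyOp_eq_add (m a : R) : whitneyOp m a = whitneyOp m 0 + a • 1 := by
  refine LinearMap.ext fun p => ?_
  simp only [whitneyOp_apply, LinearMap.add_apply, LinearMap.smul_apply, Module.End.one_apply,
    map_zero, add_zero, smul_eq_C_mul]
  ring

theorem whitneyOp_pow_eq_sum (m a : R) (n : ℕ) :
    whitneyOp m a ^ n =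
      ∑ k ∈ range (n + 1), (n.choose k * a ^ (n - k) : R) • whitneyOp m 0 ^ k := by
  rw [whitneyOp_eq_add, (Commute.smul_right (Commute.one_right _) a).add_pow]
  refine sum_congr rfl fun k _ => ?_
  rw [_root_.smul_pow, one_pow, mul_smul_comm, mul_one, smul_mul_assoc, ← Nat.cast_comm,
    ← nsmul_eq_mul, ← Nat.cast_smul_eq_nsmul R, smul_smul, mul_comm]

theorem whitneyOp_X_pow_mul (m a : R) (j : ℕ) (p : R[X]) :
    whitneyOp m a (X ^ j * p) = X ^ j * whitneyOp m (m * j + a) p := by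
  rw [whitneyOp_apply, whitneyOp_apply, derivative_mul, derivative_X_pow]
  cases j with
  | zero => simp only [pow_zero, Nat.cast_zero, mul_zero, zero_add, C_0]; ring
  | succ j => simp only [Nat.add_sub_cancel, pow_succ, Nat.cast_succ, C_add, C_mul, C_1]; ring

theorem whitneyOp_pow_X_pow_mul (m a : R) (j n : ℕ) (p : R[X]) :
    (whitneyOp m a ^ n) (X ^ j * p) = X ^ j * (whitneyOp m (m * j + a) ^ n) p := by
  induction n with
  | zero => simp
  | succ n ih => rw [pow_succ', Module.End.mul_apply, ih, whitneyOp_X_pow_mul, pow_succ',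
      Module.End.mul_apply]

theorem coeff_whitneyOp_zero (m a : R) (p : R[X]) :
    (whitneyOp m a p).coeff 0 = a * p.coeff 0 := by
  simp [whitneyOp_apply, add_mul]

theorem coeff_whitneyOp_succ (m a : R) (p : R[X]) (k : ℕ) :
    (whitneyOp m a p).coeff (k + 1) = p.coeff k + (m * (k + 1) + a) * p.coeff (k + 1) := by
  simp only [whitneyOp_apply, add_mul, coeff_add, coeff_X_mul, coeff_C_mul, coeff_derivative]
  ring

end WhitneyOperator

section RowPolynomial

variable {R : Type*} [CommRing R]

theorem rWhitney_eq_zero_of_lt (m r : R) {n k : ℕ} (h : n < k) :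
    rWhitney m r n k = 0 := by
  induction n generalizing k with
  | zero => obtain ⟨k, rfl⟩ := Nat.exists_eq_add_of_lt h; rfl
  | succ n ih =>
    obtain ⟨k, rfl⟩ := Nat.exists_eq_add_of_lt h
    rw [rWhitney, ih (by omega), ih (by omega), mul_zero, add_zero]

theorem coeff_whitneyOp_pow_one (m r : R) (n k : ℕ) :
    ((whitneyOp m r ^ n) 1).coeff k = rWhitney m r n k := by
  induction n generalizing k with
  | zero => cases k <;> simp [rWhitney, coeff_one]
  | succ n ih =>
    rw [pow_succ', Module.End.mul_apply]
    cases k with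
    | zero => rw [coeff_whitneyOp_zero, ih, rWhitney]
    | succ k => rw [coeff_whitneyOp_succ, ih, ih, rWhitney]

theorem whitneyOp_pow_one_eq_sum (m r : R) (n : ℕ) :
    (whitneyOp m r ^ n) 1 = ∑ k ∈ range (n + 1), rWhitney m r n k • X ^ k := by
  have hdeg : ((whitneyOp m r ^ n) 1).natDegree < n + 1 := by
    refine Nat.lt_succ_of_le (natDegree_le_iff_coeff_eq_zero.2 fun k hk => ?_)
    rw [coeff_whitneyOp_pow_one, rWhitney_eq_zero_of_lt m r hk]
  rw [as_sum_range' _ _ hdeg]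
  simp only [coeff_whitneyOp_pow_one, smul_X_eq_monomial]

theorem rDowling_eq_eval_whitneyOp (m r : R) (n : ℕ) :
    rDowling m r n = ((whitneyOp m r ^ n) 1).eval 1 := by
  simp [whitneyOp_pow_one_eq_sum, eval_finsetSum, rDowling]

theorem rDowling_eq_sum_choose (m r : R) (n : ℕ) :
    rDowling m r n = ∑ k ∈ range (n + 1), (n.choose k : R) * r ^ (n - k) * rDowling m 0 k := by
  simp only [rDowling_eq_eval_whitneyOp, whitneyOp_pow_eq_sum m r n, LinearMap.sum_apply,
    LinearMap.smul_apply, eval_finsetSum, eval_smul, smul_eq_mul]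

end RowPolynomial

/-- Spivey-type formula for r-Dowling numbers. -/
theorem spivey_rDowling {R : Type*} [CommRing R] (m r : R) (n ℓ : ℕ) :
    rDowling m r (n + ℓ) =
      ∑ j ∈ Finset.range (ℓ + 1), ∑ k ∈ Finset.range (n + 1),
        rWhitney m r ℓ j * (Nat.choose n k : R) * (m * (j : R) + r) ^ (n - k) *
          rDowling m 0 k := by
  have hshift (j : ℕ) : ((whitneyOp m r ^ n) (X ^ j)).eval 1 = rDowling m (m * j + r) n := by
    rw [← mul_one (X ^ j), whitneyOp_pow_X_pow_mul, eval_mul, eval_pow, eval_X, one_pow, one_mul,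
      rDowling_eq_eval_whitneyOp]
  calc rDowling m r (n + ℓ)
      = ((whitneyOp m r ^ n) ((whitneyOp m r ^ ℓ) 1)).eval 1 := by
        rw [rDowling_eq_eval_whitneyOp, pow_add, Module.End.mul_apply]
    _ = ∑ j ∈ range (ℓ + 1), rWhitney m r ℓ j * rDowling m (m * j + r) n := by
        simp only [whitneyOp_pow_one_eq_sum, map_sum, map_smul, eval_finsetSum, eval_smul,
          smul_eq_mul, hshift]
    _ = _ := by
        simp only [rDowling_eq_sum_choose m (m * _ + r) n, mul_sum, mul_assoc]
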